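/- Let a, cLI ∈ ℂ with a not an integer. Suppose f : ℤ × ℤ → ℂ satisfies, for all m, n, t ∈ ℤ, f(m,t)·(a + t + m) − f(m, n+t)·(a + t) = m·f(n+m, t) + δ_{n+m,0}·(n² − n)·cLI. Then cLI = 0. -/

import Mathlib

/-!
Write `x_m(t) = f (m, t)`. The relations with `m = 0` make `x_0` a constant `k` (as `a ≠ 0`).
For `(m, n) = (1, -1)` the left-hand side telescopes: `z t = x_1(t) (a + t + 1)` satisfies
`z t - z (t - 1) = k + 2 cLI`, so `z` is affine. The relations for `(1, 1)` express `x_2` through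
`z` and `x_1`, and substituting them into the relation for `(2, -2)` at `t = 0` gives
`2 (k + 2 cLI) = 2 k + 6 cLI`.
-/

def BracketRelation (a c : ℂ) (f : ℤ × ℤ → ℂ) : Prop :=
  ∀ m n t : ℤ, f (m, t) * (a + t + m) - f (m, n + t) * (a + t)
    = m * f (n + m, t) + (if n + m = 0 then (1 : ℂ) else 0) * (n ^ 2 - n) * c

lemma Int.eq_add_zsmul_of_forall_sub_eq {M : Type*} [AddCommGroup M] {z : ℤ → M} {d : M}
    (h : ∀ t, z t - z (t - 1) = d) (t : ℤ) : z t = z 0 + t • d := by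
  induction t using Int.induction_on with
  | zero => simp
  | succ i ih =>
    have := h (i + 1)
    rw [add_sub_cancel_right] at this
    rw [add_smul, one_smul, ← add_assoc, ← ih, ← this, add_sub_cancel]
  | pred i ih =>
    have := h (-i)
    rw [sub_smul, one_smul, ← add_sub_assoc, ← ih, ← this, sub_sub_cancel]

namespace BracketRelation

variable {a c : ℂ} {f : ℤ × ℤ → ℂ} (hf : BracketRelation a c f)
include hf

lemma zero_mode_eq (ha : a ≠ 0) (n : ℤ) : f (0, n) = f (0, 0) := by
  have h := hf 0 n 0
  by_cases hn : n = 0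
  · simp [hn]
  · simp only [Int.cast_zero, add_zero, zero_mul, if_neg hn] at h
    exact (mul_right_cancel₀ ha (sub_eq_zero.mp h)).symm

lemma one_mode_sub (t : ℤ) :
    f (1, t) * (a + t + 1) - f (1, t - 1) * (a + (t - 1 : ℤ) + 1) = f (0, t) + 2 * c := by
  have h := hf 1 (-1) t
  simp only [neg_add_cancel, if_true, Int.cast_one, Int.cast_neg, one_mul] at h
  rw [neg_add_eq_sub] at h
  push_cast
  linear_combination h

lemma two_mode_eq (t : ℤ) : f (2, t) = f (1, t) * (a + t + 1) - f (1, t + 1) * (a + t) := by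
  have h := hf 1 1 t
  norm_num at h
  rw [add_comm 1 t] at h
  linear_combination -h

lemma two_mode_central : f (2, 0) * (a + 2) - f (2, -2) * a = 2 * f (0, 0) + 6 * c := by
  have h := hf 2 (-2) 0
  norm_num at h
  linear_combination h

end BracketRelation

/-- Lemma 3.4(ii), central-charge part (case `b = 0`): if `a` is not an
integer, the scalar `cLI` by which `C_{LI}` acts is zero. -/
theorem stmt_2 (a cLI : ℂ) (ha : ∀ n : ℤ, a ≠ (n : ℂ))
    (f : ℤ × ℤ → ℂ)
    (hf : ∀ m n t : ℤ,
      f (m, t) * (a + t + m) - f (m, n + t) * (a + t)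
        = m * f (n + m, t) + (if n + m = 0 then (1 : ℂ) else 0) * (n ^ 2 - n) * cLI) :
    cLI = 0 := by
  replace hf : BracketRelation a cLI f := hf
  have ha0 : a ≠ 0 := by simpa using ha 0
  set z : ℤ → ℂ := fun t ↦ f (1, t) * (a + t + 1)
  have hz (t : ℤ) : z t = z 0 + t * (f (0, 0) + 2 * cLI) := by
    rw [← zsmul_eq_mul]
    refine Int.eq_add_zsmul_of_forall_sub_eq (fun s ↦ ?_) t
    rw [← hf.zero_mode_eq ha0 s]
    exact hf.one_mode_sub s
  have h1 := hz 1
  have h2 := hz (-1)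
  have h3 := hz (-2)
  simp only [z] at h1 h2 h3
  push_cast at h1 h2 h3
  have hc := hf.two_mode_central
  rw [hf.two_mode_eq 0, hf.two_mode_eq (-2)] at hc
  push_cast at hc
  have : 2 * cLI = 0 := by
    linear_combination -hc - a * h1 - a * h3 + (a - 2) * h2
  simpa using this
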